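/- The series identity: for β, ω > 0 and integer d_O ≥ 2, (1/d_O)·Σ_{m=1}^∞ e^{-βω(m−1)}(1 − e^{-βω}) · Σ_{j=0}^{d_O−1} ω(d_O·m − j − 1) − Σ_{m=1}^∞ e^{-βω(m−1)}(1 − e^{-βω}) · ω(m−1) = (ω(d_O−1)/2)·coth(βω/2). -/
import Mathlib


open Finset Real

/-- Hyperbolic cotangent `coth x = (e^x + e^{-x})/(e^x − e^{-x})`. -/
noncomputable def coth (x : ℝ) : ℝ :=
  (Real.exp x + Real.exp (-x)) / (Real.exp x - Real.exp (-x))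

/-- **Series identity for the erasure heat**: for `β, ω > 0` and `d_O ≥ 2`,
`(1/d_O)·Σ_{m=1}^∞ e^{-βω(m−1)}(1−e^{-βω})·Σ_{j=0}^{d_O−1} ω(d_O·m − j − 1)
 − Σ_{m=1}^∞ e^{-βω(m−1)}(1−e^{-βω})·ω(m−1) = (ω(d_O−1)/2)·coth(βω/2)`
(the sum over `m ≥ 1` is written as a sum over `m : ℕ` via `m ↦ m + 1`). -/
theorem erasure_heat_series_identity (dO : ℕ) (hdO : 2 ≤ dO)
    (β ω : ℝ) (hβ : 0 < β) (hω : 0 < ω) :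
    (1 / (dO : ℝ)) *
        (∑' m : ℕ, Real.exp (-(β * ω) * m) * (1 - Real.exp (-(β * ω))) *
          ∑ j ∈ Finset.range dO, ω * ((dO : ℝ) * (m + 1) - j - 1))
      - (∑' m : ℕ, Real.exp (-(β * ω) * m) * (1 - Real.exp (-(β * ω))) * (ω * m))
      = ω * ((dO : ℝ) - 1) / 2 * coth (β * ω / 2) := by
  set q : ℝ := Real.exp (-(β * ω)) with hqdef
  have hq0 : 0 < q := Real.exp_pos _
  have hq1 : q < 1 := by
    rw [hqdef, Real.exp_lt_one_iff]; nlinarith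
  have hqne : (1 : ℝ) - q ≠ 0 := by linarith
  have hdO0 : (0:ℝ) < (dO:ℝ) := by positivity
  have hpow : ∀ m : ℕ, Real.exp (-(β * ω) * m) = q ^ m := by
    intro m
    rw [hqdef, ← Real.exp_nat_mul, mul_comm]
  have hsum1 : Summable (fun m : ℕ => q ^ m) :=
    summable_geometric_of_lt_one hq0.le hq1
  have hsum2 : Summable (fun m : ℕ => (m : ℝ) * q ^ m) := by
    have := summable_pow_mul_geometric_of_norm_lt_one (R := ℝ) 1
      (r := q) (by rwa [Real.norm_eq_abs, abs_of_pos hq0])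
    simpa using this
  have hg : ∑' m : ℕ, q ^ m = (1 - q)⁻¹ :=
    tsum_geometric_of_lt_one hq0.le hq1
  have hmg : ∑' m : ℕ, (m : ℝ) * q ^ m = q / (1 - q) ^ 2 :=
    tsum_coe_mul_geometric_of_norm_lt_one
      (by rwa [Real.norm_eq_abs, abs_of_pos hq0])
  -- Gauss sum
  have hid' : ∀ n : ℕ, (∑ j ∈ Finset.range n, (j : ℝ)) = (n : ℝ) * ((n : ℝ) - 1) / 2 := by
    intro n
    induction n with
    | zero => simp
    | succ k ih =>
      rw [Finset.sum_range_succ, ih]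
      push_cast; ring
  have hid := hid' dO
  -- inner sum
  have hinner : ∀ m : ℕ, (∑ j ∈ Finset.range dO, ω * ((dO : ℝ) * (m + 1) - j - 1))
      = ω * ((dO:ℝ)^2 * (m + 1) - (dO:ℝ) * ((dO:ℝ) + 1) / 2) := by
    intro m
    rw [← Finset.mul_sum]
    congr 1
    rw [Finset.sum_sub_distrib, Finset.sum_sub_distrib, Finset.sum_const, Finset.sum_const,
      hid]
    simp [Finset.card_range]
    ring
  -- rewrite first tsum
  set A : ℝ := (1 - q) * (ω * (dO:ℝ)^2)
  set B : ℝ := (1 - q) * (ω * ((dO:ℝ)^2 - (dO:ℝ) * ((dO:ℝ) + 1) / 2))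
  have h1 : (∑' m : ℕ, Real.exp (-(β * ω) * m) * (1 - q) *
        ∑ j ∈ Finset.range dO, ω * ((dO : ℝ) * (m + 1) - j - 1))
      = A * (q / (1 - q)^2) + B * (1 - q)⁻¹ := by
    have : (fun m : ℕ => Real.exp (-(β * ω) * m) * (1 - q) *
          ∑ j ∈ Finset.range dO, ω * ((dO : ℝ) * (m + 1) - j - 1))
        = fun m : ℕ => A * ((m : ℝ) * q ^ m) + B * q ^ m := by
      funext m
      rw [hpow, hinner]
      simp only [A, B]
      ring
    rw [this, Summable.tsum_add (hsum2.mul_left A) (hsum1.mul_left B), tsum_mul_left,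
      tsum_mul_left, hg, hmg]
  have h2 : (∑' m : ℕ, Real.exp (-(β * ω) * m) * (1 - q) * (ω * m))
      = ((1 - q) * ω) * (q / (1 - q)^2) := by
    have : (fun m : ℕ => Real.exp (-(β * ω) * m) * (1 - q) * (ω * m))
        = fun m : ℕ => ((1 - q) * ω) * ((m : ℝ) * q ^ m) := by
      funext m; rw [hpow]; ring
    rw [this, tsum_mul_left, hmg]
  rw [h1, h2]
  -- now pure algebra with coth
  have hE : Real.exp (β * ω / 2) * Real.exp (-(β * ω / 2)) = 1 := by
    rw [← Real.exp_add]; simp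
  have hq2 : q = Real.exp (-(β * ω / 2)) * Real.exp (-(β * ω / 2)) := by
    rw [hqdef, ← Real.exp_add]; ring_nf
  have hE1 : 1 < Real.exp (β * ω / 2) := by
    rw [Real.one_lt_exp_iff]; positivity
  have hE2 : Real.exp (-(β * ω / 2)) < 1 := by
    rw [Real.exp_lt_one_iff]; nlinarith
  have hEpos : 0 < Real.exp (-(β * ω / 2)) := Real.exp_pos _
  have hden : Real.exp (β * ω / 2) - Real.exp (-(β * ω / 2)) ≠ 0 := by nlinarith
  have hcoth : coth (β * ω / 2) = (1 + q) / (1 - q) := by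
    rw [coth, div_eq_div_iff hden hqne]
    linear_combination (-2 * Real.exp (β * ω / 2)) * hq2
      + (-2 * Real.exp (-(β * ω / 2))) * hE
  rw [hcoth]
  simp only [A, B]
  field_simp
  ring
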